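/- arXiv:1710.03647 — 2 statements merged into one kernel-verified Lean document; each statement's English description precedes it below -/
import Mathlib

section
/- Let f be an energy progress measure for an energy game arena Γ and let v ∈ V with f(v) ≠ ⊤, say f(v) = n ∈ ℕ. Then player 0 has a memoryless strategy σ₀ (choosing at each u ∈ V₀ with f(u) ≠ ⊤ a successor u' with f(u) ⪰ f(u') ⊖ w(u,u')) that is winning from v with initial credit n: every play from v consistent with σ₀ has all prefix energy levels ≥ 0 for initial credit n. -/
/-!
Let player 0 move, at each of its vertices, to a successor witnessing the progress-measure
condition. Along any play consistent with this strategy every step satisfies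
`f(ρ j) ⪰ f(ρ (j+1)) ⊖ w`, so by induction `f(ρ j)` stays finite and never exceeds the energy
level of the prefix, which starts at `n = f(v)`; in particular the energy level is never negative.
-/

open scoped Classical
noncomputable section

/-- An energy game arena: vertices `V`, edge relation `E`, integer weights `w`,
player-0 vertices `P0` (player 1 owns the rest), every vertex has a successor. -/
structure Arena (V : Type) where
  E : V → V → Prop
  w : V → V → ℤ
  P0 : V → Prop
  total : ∀ v, ∃ v', E v v'

variable {V : Type}

def IsPlay (A : Arena V) (v : V) (ρ : ℕ → V) : Prop :=
  ρ 0 = v ∧ ∀ i, A.E (ρ i) (ρ (i + 1))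

def Strategy0 (A : Arena V) (σ : V → V) : Prop :=
  ∀ v, A.P0 v → A.E v (σ v)

def Strategy1 (A : Arena V) (σ : V → V) : Prop :=
  ∀ v, ¬ A.P0 v → A.E v (σ v)

def Consistent0 (A : Arena V) (σ : V → V) (ρ : ℕ → V) : Prop :=
  ∀ j, A.P0 (ρ j) → ρ (j + 1) = σ (ρ j)

def Consistent1 (A : Arena V) (σ : V → V) (ρ : ℕ → V) : Prop :=
  ∀ j, ¬ A.P0 (ρ j) → ρ (j + 1) = σ (ρ j)

/-- Energy level of the prefix `ρ 0 … ρ j` with initial credit `c`. -/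
def energy (A : Arena V) (c : ℕ) (ρ : ℕ → V) (j : ℕ) : ℤ :=
  (c : ℤ) + ∑ i ∈ Finset.range j, A.w (ρ i) (ρ (i + 1))

def WinningFrom (A : Arena V) (σ : V → V) (v : V) (c : ℕ) : Prop :=
  ∀ ρ : ℕ → V, IsPlay A v ρ → Consistent0 A σ ρ → ∀ j, 0 ≤ energy A c ρ j

/-- Winning region of player 0. -/
def W0 (A : Arena V) : Set V :=
  {v | ∃ σ : V → V, Strategy0 A σ ∧ ∃ c : ℕ, WinningFrom A σ v c}

/-- `a ⊖ b = max (0, a - b)`, with `⊤ ⊖ b = ⊤`. -/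
def osub (a : ℕ∞) (b : ℤ) : ℕ∞ :=
  a.map (fun n : ℕ => ((n : ℤ) - b).toNat)

def IsEPM (A : Arena V) (f : V → ℕ∞) : Prop :=
  (∀ v, A.P0 v → ∃ v', A.E v v' ∧ osub (f v') (A.w v v') ≤ f v) ∧
  (∀ v, ¬ A.P0 v → ∀ v', A.E v v' → osub (f v') (A.w v v') ≤ f v)

/-- New value at `v` computed by the lifting operator. -/
def liftVal (A : Arena V) (f : V → ℕ∞) (v : V) : ℕ∞ :=
  if A.P0 v then sInf {x : ℕ∞ | ∃ v', A.E v v' ∧ x = osub (f v') (A.w v v')}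
  else sSup {x : ℕ∞ | ∃ v', A.E v v' ∧ x = osub (f v') (A.w v v')}

/-- The lifting operator `δ(·, v)`. -/
def liftOp (A : Arena V) (f : V → ℕ∞) (v : V) : V → ℕ∞ :=
  fun u => if u = v then liftVal A f v else f u

def Violates (A : Arena V) (f : V → ℕ∞) (v : V) : Prop :=
  (A.P0 v ∧ ∀ v', A.E v v' → f v < osub (f v') (A.w v v')) ∨
  (¬ A.P0 v ∧ ∃ v', A.E v v' ∧ f v < osub (f v') (A.w v v'))

/-- `M_Γ = Σ_{v∈V} max({0} ∪ {−w(v,v') : (v,v') ∈ E})`. -/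
def MGamma (A : Arena V) [Fintype V] : ℕ :=
  ∑ v : V, (Finset.univ.filter (fun v' => A.E v v')).sup (fun v' => (-(A.w v v')).toNat)

theorem osub_top (b : ℤ) : osub ⊤ b = ⊤ := rfl

theorem osub_natCast (k : ℕ) (b : ℤ) : osub k b = ((k - b).toNat : ℕ) := rfl

theorem osub_le_natCast_iff {a : ℕ∞} {b : ℤ} {m : ℕ} :
    osub a b ≤ m ↔ ∃ k : ℕ, a = k ∧ (k : ℤ) - b ≤ m := by
  cases a with
  | top => simp [osub_top]
  | coe k => simp only [osub_natCast, Nat.cast_le, Int.toNat_le, Nat.cast_inj, exists_eq_left']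

theorem energy_succ (A : Arena V) (c : ℕ) (ρ : ℕ → V) (j : ℕ) :
    energy A c ρ (j + 1) = energy A c ρ j + A.w (ρ j) (ρ (j + 1)) := by
  simp only [energy, Finset.sum_range_succ, add_assoc]

theorem exists_natCast_le_energy {A : Arena V} {f : V → ℕ∞} {ρ : ℕ → V} {c : ℕ}
    (hstep : ∀ j, osub (f (ρ (j + 1))) (A.w (ρ j) (ρ (j + 1))) ≤ f (ρ j))
    (h₀ : f (ρ 0) ≤ c) (j : ℕ) :
    ∃ m : ℕ, f (ρ j) = m ∧ (m : ℤ) ≤ energy A c ρ j := by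
  induction j with
  | zero =>
    obtain ⟨m, hm, hmc⟩ := ENat.le_natCast_iff.mp h₀
    exact ⟨m, hm, by simpa [energy] using hmc⟩
  | succ j ih =>
    obtain ⟨m, hm, hme⟩ := ih
    obtain ⟨k, hk, hkm⟩ := osub_le_natCast_iff.mp (hm ▸ hstep j)
    refine ⟨k, hk, ?_⟩
    rw [energy_succ]
    omega

theorem IsEPM.exists_move {A : Arena V} {f : V → ℕ∞} (h : IsEPM A f) (u : V) :
    ∃ u', A.E u u' ∧ (A.P0 u → osub (f u') (A.w u u') ≤ f u) := by
  by_cases hu : A.P0 u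
  · obtain ⟨u', hE, hle⟩ := h.1 u hu
    exact ⟨u', hE, fun _ => hle⟩
  · obtain ⟨u', hE⟩ := A.total u
    exact ⟨u', hE, fun h' => absurd h' hu⟩

def IsEPM.strategy {A : Arena V} {f : V → ℕ∞} (h : IsEPM A f) : V → V :=
  fun u => Classical.choose (h.exists_move u)

section strategy

variable {A : Arena V} {f : V → ℕ∞} (h : IsEPM A f)
include h

theorem IsEPM.strategy0 : Strategy0 A h.strategy :=
  fun u _ => (Classical.choose_spec (h.exists_move u)).1

theorem IsEPM.osub_strategy_le {u : V} (hu : A.P0 u) :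
    osub (f (h.strategy u)) (A.w u (h.strategy u)) ≤ f u :=
  (Classical.choose_spec (h.exists_move u)).2 hu

theorem IsEPM.osub_le_of_consistent {ρ : ℕ → V} (hE : ∀ i, A.E (ρ i) (ρ (i + 1)))
    (hcons : Consistent0 A h.strategy ρ) (j : ℕ) :
    osub (f (ρ (j + 1))) (A.w (ρ j) (ρ (j + 1))) ≤ f (ρ j) := by
  by_cases hP : A.P0 (ρ j)
  · rw [hcons j hP]
    exact h.osub_strategy_le hP
  · exact h.2 (ρ j) hP (ρ (j + 1)) (hE j)

end strategy

theorem stmt8_general {V : Type} (A : Arena V)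
    (f : V → ℕ∞) (hEPM : IsEPM A f) (v : V) (n : ℕ) (hfv : f v = (n : ℕ∞)) :
    ∃ σ : V → V, Strategy0 A σ ∧
      (∀ u, A.P0 u → f u ≠ ⊤ → osub (f (σ u)) (A.w u (σ u)) ≤ f u) ∧
      WinningFrom A σ v n := by
  refine ⟨hEPM.strategy, hEPM.strategy0, fun u hu _ => hEPM.osub_strategy_le hu, ?_⟩
  rintro ρ ⟨hρ₀, hE⟩ hcons j
  obtain ⟨m, -, hm⟩ := exists_natCast_le_energy (hEPM.osub_le_of_consistent hE hcons)
    (by rw [hρ₀, hfv]) j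
  omega

/-- From an EPM `f` with `f v = n ≠ ⊤`, player 0 has a memoryless strategy, choosing at
each `u ∈ V₀` with `f u ≠ ⊤` a successor `u'` with `f u ⪰ f u' ⊖ w(u,u')`, which is
winning from `v` with initial credit `n`. -/
theorem stmt8 {V : Type} [Fintype V] [Nonempty V] (A : Arena V)
    (f : V → ℕ∞) (hEPM : IsEPM A f) (v : V) (n : ℕ) (hfv : f v = (n : ℕ∞)) :
    ∃ σ : V → V, Strategy0 A σ ∧
      (∀ u, A.P0 u → f u ≠ ⊤ → osub (f (σ u)) (A.w u (σ u)) ≤ f u) ∧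
      WinningFrom A σ v n :=
  stmt8_general A f hEPM v n hfv
end
end

section
/- Let Γ be an energy game arena with least energy progress measure f*. Let f₀ be the constant-0 function on V, and let f₀, f₁, …, f_k be any sequence with f_{j+1} = δ(f_j, v_j) where f_j violates the EPM local condition at v_j, for each j < k. Then f_j ⊑ f* for every j ≤ k: every function reachable from 0 by lifts at violating vertices is bounded above by the least energy progress measure. -/
open scoped Classical
noncomputable section

variable {V : Type}

/-! Every EPM `g` satisfies `δ(g, v) ⊑ g`, and `δ(·, v)` is monotone, so `f ⊑ g` gives
`δ(f, v) ⊑ g`; by induction from the constant-0 function every `F j` lies below `f*`. -/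

lemma osub_mono (b : ℤ) : Monotone (osub · b) :=
  Monotone.withTop_map fun _ _ hmn => by
    simpa using Int.toNat_le_toNat (Int.sub_le_sub_right (Int.ofNat_le.mpr hmn) b)

section Lift

variable {A : Arena V} {f g : V → ℕ∞}

lemma liftVal_le_of_le_of_isEPM (hfg : f ≤ g) (hg : IsEPM A g) (v : V) :
    liftVal A f v ≤ g v := by
  unfold liftVal
  split_ifs with hv
  · obtain ⟨v', hvv', hle⟩ := hg.1 v hv
    refine (sInf_le ?_).trans ((osub_mono _ (hfg v')).trans hle)
    exact ⟨v', hvv', rfl⟩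
  · refine sSup_le ?_
    rintro x ⟨v', hvv', rfl⟩
    exact (osub_mono _ (hfg v')).trans (hg.2 v hv v' hvv')

lemma liftOp_le_of_le_of_isEPM (hfg : f ≤ g) (hg : IsEPM A g) (v : V) :
    liftOp A f v ≤ g := by
  intro u
  unfold liftOp
  split_ifs with hu
  · exact hu ▸ liftVal_le_of_le_of_isEPM hfg hg v
  · exact hfg u

end Lift

theorem stmt11_general {V : Type} (A : Arena V)
    (fstar : V → ℕ∞) (hEPM : IsEPM A fstar)
    (k : ℕ) (F : ℕ → V → ℕ∞) (vs : ℕ → V)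
    (h0 : F 0 = fun _ => 0)
    (hstep : ∀ j < k, Violates A (F j) (vs j) ∧ F (j + 1) = liftOp A (F j) (vs j)) :
    ∀ j ≤ k, ∀ u, F j u ≤ fstar u := by
  intro j hj
  induction j with
  | zero => simp [h0]
  | succ n ih =>
    rw [(hstep n hj).2]
    exact liftOp_le_of_le_of_isEPM (ih (by omega)) hEPM (vs n)

/-- Every function reachable from the constant-0 function by lifts at violating
vertices is bounded above by the least energy progress measure. -/
theorem stmt11 {V : Type} [Fintype V] [Nonempty V] (A : Arena V)
    (fstar : V → ℕ∞) (hEPM : IsEPM A fstar)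
    (hleast : ∀ f : V → ℕ∞, IsEPM A f → ∀ v, fstar v ≤ f v)
    (k : ℕ) (F : ℕ → V → ℕ∞) (vs : ℕ → V)
    (h0 : F 0 = fun _ => 0)
    (hstep : ∀ j < k, Violates A (F j) (vs j) ∧ F (j + 1) = liftOp A (F j) (vs j)) :
    ∀ j ≤ k, ∀ u, F j u ≤ fstar u :=
  stmt11_general A fstar hEPM k F vs h0 hstep
end
end
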